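/- arXiv:math/0507038 — 5 statements merged into one kernel-verified Lean document; each statement's English description precedes it below -/
import Mathlib

section
/- For R-sequences a and b and an R-set map h with h_∅ = 0, composition distributes over the sequence product: (a·b) ∘ h = (a ∘ h)·(b ∘ h), where (a·b)_n = ∑_{k=0}^n (n choose k) a_k b_{n-k}. -/
open scoped Classical

noncomputable section

/-- The product of set maps: `(g·h)_S = ∑_{T ⊎ U = S} g_T h_U`. -/
def setMul {V R : Type*} [DecidableEq V] [CommRing R] (g h : Finset V → R) :
    Finset V → R :=
  fun S => ∑ T ∈ S.powerset, g T * h (S \ T)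

/-- The set of set partitions of a finite set `S`: collections of nonempty,
pairwise disjoint subsets of `S` with union `S`. -/
def partitions {V : Type*} [DecidableEq V] (S : Finset V) :
    Finset (Finset (Finset V)) :=
  S.powerset.powerset.filter
    (fun P => (∀ T ∈ P, T ≠ ∅) ∧ P.sup id = S ∧
      ∀ T ∈ P, ∀ U ∈ P, T ≠ U → Disjoint T U)

lemma mem_partitions' {V : Type*} [DecidableEq V] {S : Finset V} {P : Finset (Finset V)} :
    P ∈ partitions S ↔ (∀ T ∈ P, T ≠ ∅) ∧ P.sup id = S ∧
      ∀ T ∈ P, ∀ U ∈ P, T ≠ U → Disjoint T U := by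
  simp only [partitions, Finset.mem_filter, Finset.mem_powerset, and_iff_right_iff_imp]
  rintro ⟨-, hsup, -⟩ T hT
  exact Finset.mem_powerset.2 (hsup ▸ Finset.le_sup (f := id) hT)

lemma partitions_union' {V : Type*} [DecidableEq V] {T U : Finset V}
    {P Q : Finset (Finset V)} (hTU : Disjoint T U)
    (hP : P ∈ partitions T) (hQ : Q ∈ partitions U) :
    P ∪ Q ∈ partitions (T ∪ U) ∧ Disjoint P Q := by
  obtain ⟨hP0, hPs, hPd⟩ := mem_partitions'.1 hP
  obtain ⟨hQ0, hQs, hQd⟩ := mem_partitions'.1 hQ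
  have hsubP : ∀ X ∈ P, X ⊆ T := fun X hX => hPs ▸ Finset.le_sup (f := id) hX
  have hsubQ : ∀ X ∈ Q, X ⊆ U := fun X hX => hQs ▸ Finset.le_sup (f := id) hX
  have hdisj : Disjoint P Q := by
    rw [Finset.disjoint_left]
    intro X hXP hXQ
    exact hP0 X hXP (Finset.subset_empty.1 <|
      (Finset.subset_inter (hsubP X hXP) (hsubQ X hXQ)).trans
        (by rw [Finset.disjoint_iff_inter_eq_empty.1 hTU]))
  refine ⟨mem_partitions'.2 ⟨?_, ?_, ?_⟩, hdisj⟩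
  · intro X hX
    rcases Finset.mem_union.1 hX with hX | hX
    exacts [hP0 X hX, hQ0 X hX]
  · rw [Finset.sup_union, hPs, hQs]; rfl
  · intro X hX Y hY hne
    rcases Finset.mem_union.1 hX with hX | hX <;> rcases Finset.mem_union.1 hY with hY | hY
    · exact hPd X hX Y hY hne
    · exact (hTU.mono (hsubP X hX) (hsubQ Y hY))
    · exact (hTU.mono (hsubP Y hY) (hsubQ X hX)).symm
    · exact hQd X hX Y hY hne

lemma partitions_split' {V : Type*} [DecidableEq V] {S : Finset V}
    {σ K : Finset (Finset V)} (hσ : σ ∈ partitions S) (hK : K ⊆ σ) :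
    K ∈ partitions (K.sup id) ∧ (σ \ K) ∈ partitions (S \ K.sup id) ∧
      K.sup id ⊆ S := by
  obtain ⟨h0, hs, hd⟩ := mem_partitions'.1 hσ
  have hdKs : Disjoint (K.sup id) ((σ \ K).sup id) := by
    rw [Finset.disjoint_sup_left]
    intro X hX
    rw [Finset.disjoint_sup_right]
    intro Y hY
    have hYK := Finset.mem_sdiff.1 hY
    exact hd X (hK hX) Y hYK.1 (fun e => hYK.2 (e ▸ hX))
  have hun : K.sup id ∪ (σ \ K).sup id = S := by
    have := (Finset.sup_union (s₁ := K) (s₂ := σ \ K) (f := id)).symm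
    rw [Finset.union_sdiff_of_subset hK, hs] at this
    rw [← Finset.sup_eq_union]
    exact this
  refine ⟨mem_partitions'.2 ⟨fun X hX => h0 X (hK hX), rfl,
      fun X hX Y hY hne => hd X (hK hX) Y (hK hY) hne⟩,
    mem_partitions'.2 ⟨fun X hX => h0 X (Finset.mem_sdiff.1 hX).1, ?_,
      fun X hX Y hY hne => hd X (Finset.mem_sdiff.1 hX).1 Y (Finset.mem_sdiff.1 hY).1 hne⟩,
    hun ▸ Finset.subset_union_left⟩
  rw [← hun, Finset.union_sdiff_cancel_left hdKs]

/-- Composition of a sequence with a set map: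
`(a ∘ h)_S = ∑_{σ ⊢ S} a_{ℓ(σ)} ∏_{T ∈ σ} h_T`. -/
def setComp {V R : Type*} [DecidableEq V] [CommRing R] (a : ℕ → R)
    (h : Finset V → R) : Finset V → R :=
  fun S => ∑ P ∈ partitions S, a P.card * ∏ T ∈ P, h T

/-- Composition distributes over the binomial product of sequences:
`(a·b) ∘ h = (a ∘ h)·(b ∘ h)`. -/
theorem setComp_seqMul {V R : Type*} [DecidableEq V] [CommRing R]
    (a b : ℕ → R) (h : Finset V → R) (h0 : h ∅ = 0) :
    setComp (fun n => ∑ k ∈ Finset.range (n + 1), (n.choose k : R) * a k * b (n - k)) h =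
      setMul (setComp a h) (setComp b h) := by
  funext S
  simp only [setComp, setMul]
  have key : ∀ σ : Finset (Finset V),
      (∑ k ∈ Finset.range (σ.card + 1), (σ.card.choose k : R) * a k * b (σ.card - k))
        = ∑ K ∈ σ.powerset, a K.card * b (σ.card - K.card) := by
    intro σ
    rw [Finset.sum_powerset_apply_card (fun k => a k * b (σ.card - k))]
    simp [mul_assoc]
  calc ∑ σ ∈ partitions S,
        (∑ k ∈ Finset.range (σ.card + 1), (σ.card.choose k : R) * a k * b (σ.card - k))
          * ∏ T ∈ σ, h T
      = ∑ σ ∈ partitions S, ∑ K ∈ σ.powerset,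
          (a K.card * ∏ X ∈ K, h X) * (b ((σ \ K).card) * ∏ X ∈ σ \ K, h X) := by
        refine Finset.sum_congr rfl fun σ hσ => ?_
        rw [key, Finset.sum_mul]
        refine Finset.sum_congr rfl fun K hK => ?_
        have hKσ : K ⊆ σ := Finset.mem_powerset.1 hK
        rw [Finset.card_sdiff_of_subset hKσ, ← Finset.prod_sdiff hKσ]
        ring
    _ = ∑ x ∈ (partitions S).sigma (fun σ => σ.powerset),
          (a x.2.card * ∏ X ∈ x.2, h X) * (b ((x.1 \ x.2).card) * ∏ X ∈ x.1 \ x.2, h X) := by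
        rw [Finset.sum_sigma]
    _ = ∑ y ∈ S.powerset.sigma (fun T => partitions T ×ˢ partitions (S \ T)),
          (a y.2.1.card * ∏ X ∈ y.2.1, h X) * (b y.2.2.card * ∏ X ∈ y.2.2, h X) := by
        refine Finset.sum_nbij' (fun x => ⟨x.2.sup id, (x.2, x.1 \ x.2)⟩)
          (fun y => ⟨y.2.1 ∪ y.2.2, y.2.1⟩) ?_ ?_ ?_ ?_ ?_
        · rintro ⟨σ, K⟩ hx
          rw [Finset.mem_sigma] at hx
          obtain ⟨hK, hdiff, hsub⟩ := partitions_split' hx.1 (Finset.mem_powerset.1 hx.2)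
          exact Finset.mem_sigma.2 ⟨Finset.mem_powerset.2 hsub,
            Finset.mem_product.2 ⟨hK, hdiff⟩⟩
        · rintro ⟨T, P, Q⟩ hy
          rw [Finset.mem_sigma, Finset.mem_product] at hy
          obtain ⟨hT, hP, hQ⟩ := hy
          have hTS := Finset.mem_powerset.1 hT
          obtain ⟨hun, -⟩ := partitions_union' (Finset.disjoint_sdiff) hP hQ
          rw [Finset.union_sdiff_of_subset hTS] at hun
          exact Finset.mem_sigma.2 ⟨hun, Finset.mem_powerset.2 Finset.subset_union_left⟩
        · rintro ⟨σ, K⟩ hx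
          rw [Finset.mem_sigma] at hx
          simp only
          congr 1
          exact Finset.union_sdiff_of_subset (Finset.mem_powerset.1 hx.2)
        · rintro ⟨T, P, Q⟩ hy
          rw [Finset.mem_sigma, Finset.mem_product] at hy
          obtain ⟨hT, hP, hQ⟩ := hy
          obtain ⟨-, hdisj⟩ := partitions_union' (Finset.disjoint_sdiff) hP hQ
          have h1 : P.sup id = T := (mem_partitions'.1 hP).2.1
          have h2 : (P ∪ Q) \ P = Q := Finset.union_sdiff_cancel_left hdisj
          simp only [h1, h2]
        · rintro ⟨σ, K⟩ hx
          rfl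
    _ = ∑ T ∈ S.powerset, (∑ P ∈ partitions T, a P.card * ∏ X ∈ P, h X)
          * ∑ Q ∈ partitions (S \ T), b Q.card * ∏ X ∈ Q, h X := by
        rw [Finset.sum_sigma]
        exact Finset.sum_congr rfl fun T _ => by
          rw [Finset.sum_product, Finset.sum_mul_sum]
end
end

section
/- If p(x) is a polynomial set map of binomial type and L, M are linear functionals on K[x], then LM p(x) = (L p(x)) · (M p(x)) as set maps, i.e., (LM) p_S(x) = ∑_{T ⊎ U = S} (L p_T(x))(M p_U(x)) for each finite S. -/
open scoped Classical
open Polynomial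

noncomputable section

/-- A polynomial set map is of binomial type if
`p_S(x+y) = ∑_{T ⊎ U = S} p_T(x) p_U(y)`. -/
def BinomialType {V K : Type*} [DecidableEq V] [Field K] [CharZero K]
    (p : Finset V → Polynomial K) : Prop :=
  ∀ S : Finset V, ∀ x y : K,
    (p S).eval (x + y) = ∑ T ∈ S.powerset, (p T).eval x * (p (S \ T)).eval y

/-- The umbral product of two functionals, defined on monomials by
`LM x^n = ∑_{k=0}^n (n choose k) (L x^k)(M x^{n-k})` and extended linearly. -/
def umbralMul {K : Type*} [Field K] (L M : Polynomial K → K) : Polynomial K → K :=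
  fun f => ∑ n ∈ f.support, f.coeff n *
    ∑ k ∈ Finset.range (n + 1), (n.choose k : K) * L (X ^ k) * M (X ^ (n - k))

/-!
Write `K[X][X]` for `K[x, y]`, with `x = C X` the inner and `y = X` the outer variable, and let
`L ⊗ M` act on it by `L` in `x` and `M` in `y`. By the binomial theorem `LM f = (L ⊗ M) (f (x + y))`.
Since `K` is infinite, comparing values shows that binomial type means
`p_S (x + y) = ∑ p_T (x) p_{S \ T} (y)` in `K[x, y]`, and `L ⊗ M` sends each summand to
`L p_T · M p_{S \ T}`.
-/

namespace Polynomial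

theorem funext_evalEval {R : Type*} [CommRing R] [IsDomain R] [Infinite R] {p q : R[X][X]}
    (h : ∀ x y, p.evalEval x y = q.evalEval x y) : p = q := by
  ext1 n
  refine funext fun x => ?_
  have hx : p.map (evalRingHom x) = q.map (evalRingHom x) :=
    funext fun y => by simp only [map_evalRingHom_eval, h]
  simpa only [coeff_map, coe_evalRingHom] using congrArg (coeff · n) hx

theorem evalEval_aeval_C_X_add_X {R : Type*} [CommSemiring R] (f : R[X]) (x y : R) :
    (aeval (C X + X : R[X][X]) f).evalEval x y = f.eval (x + y) := by
  induction f using Polynomial.induction_on' with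
  | add f g hf hg => simp only [map_add, evalEval_add, eval_add, hf, hg]
  | monomial n a => simp [evalEval]

section TensorFunctional

variable {R : Type*} [CommSemiring R] (L M : R[X] →ₗ[R] R)

def tensorFunctional : R[X][X] →ₗ[R] R :=
  lsum fun n => M (X ^ n) • L

theorem tensorFunctional_C_mul_X_pow (a : R[X]) (n : ℕ) :
    tensorFunctional L M (C a * X ^ n) = L a * M (X ^ n) := by
  rw [C_mul_X_pow_eq_monomial, tensorFunctional, lsum_apply,
    sum_monomial_index _ _ (map_zero (M (X ^ n) • L)), LinearMap.smul_apply, smul_eq_mul, mul_comm]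

theorem tensorFunctional_C_mul_map_C (f g : R[X]) :
    tensorFunctional L M (C f * g.map C) = L f * M g := by
  induction g using Polynomial.induction_on' with
  | add g h hg hh => simp only [Polynomial.map_add, mul_add, map_add, hg, hh]
  | monomial n a =>
    rw [map_monomial, C_mul_monomial, ← C_mul_X_pow_eq_monomial, tensorFunctional_C_mul_X_pow,
      ← C_mul_X_pow_eq_monomial, mul_comm f, ← smul_eq_C_mul, ← smul_eq_C_mul, map_smul, map_smul,
      smul_eq_mul, smul_eq_mul, mul_left_comm, mul_assoc]

theorem tensorFunctional_C_X_add_X_pow (n : ℕ) :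
    tensorFunctional L M ((C X + X) ^ n) =
      ∑ k ∈ Finset.range (n + 1), (n.choose k : R) * L (X ^ k) * M (X ^ (n - k)) := by
  rw [add_pow, map_sum]
  refine Finset.sum_congr rfl fun k _ => ?_
  rw [← C_pow, mul_comm, ← nsmul_eq_mul, map_nsmul, tensorFunctional_C_mul_X_pow, nsmul_eq_mul,
    mul_assoc]

end TensorFunctional

theorem umbralMul_eq_tensorFunctional_aeval {K : Type*} [Field K] (L M : K[X] →ₗ[K] K)
    (f : K[X]) : umbralMul L M f = tensorFunctional L M (aeval (C X + X) f) := by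
  rw [aeval_def, eval₂_eq_sum, Polynomial.sum_def, map_sum, umbralMul]
  refine Finset.sum_congr rfl fun n _ => ?_
  rw [← Algebra.smul_def, map_smul, tensorFunctional_C_X_add_X_pow, smul_eq_mul]

end Polynomial

theorem BinomialType.aeval_C_X_add_X {V K : Type*} [DecidableEq V] [Field K] [CharZero K]
    {p : Finset V → K[X]} (hp : BinomialType p) (S : Finset V) :
    aeval (C X + X : K[X][X]) (p S) = ∑ T ∈ S.powerset, C (p T) * (p (S \ T)).map C :=
  funext_evalEval fun x y => by
    simp only [evalEval_aeval_C_X_add_X, hp S x y, evalEval_finsetSum, evalEval_mul, evalEval_C,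
      evalEval_map_C]

/-- For a polynomial set map of binomial type, `LM p(x) = (L p(x))·(M p(x))`
as set maps. -/
theorem umbralMul_apply_binomialType {V K : Type*} [DecidableEq V] [Field K]
    [CharZero K] (p : Finset V → Polynomial K) (hp : BinomialType p)
    (L M : Polynomial K →ₗ[K] K) :
    ∀ S : Finset V,
      umbralMul (⇑L) (⇑M) (p S) = ∑ T ∈ S.powerset, L (p T) * M (p (S \ T)) := by
  intro S
  rw [umbralMul_eq_tensorFunctional_aeval, hp.aeval_C_X_add_X, map_sum]
  exact Finset.sum_congr rfl fun T _ => tensorFunctional_C_mul_map_C L M _ _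
end
end

section
/- If A is a delta functional (A1 = 0, Ax ≠ 0) on K[x], then any polynomial f(x) is uniquely determined by the sequence of values A^k f(x) for k ≥ 0, where A^0 f(x) = f(0): if A^k f = A^k g for all k ≥ 0 then f = g. -/
/-!
Every umbral power `A^k` is a linear functional, and when `A 1 = 0` the binomial expansion of
`A^(k+1) x^n` kills the term with `A x^0`, so by induction `A^k x^n = 0` for `n < k` and
`A^k x^k = k! (A x)^k`. Hence for `p = f - g` of degree `n`, `A^n p = n! (A x)^n · lc(p)`,
which is nonzero unless `p = 0`.
-/

open scoped Classical
open Polynomial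

noncomputable section

/-- Umbral powers of a functional, with `A^0 f = f(0)`. -/
def umbralPow {K : Type*} [Field K] (A : Polynomial K → K) : ℕ → Polynomial K → K
  | 0 => fun f => f.eval 0
  | k + 1 => umbralMul A (umbralPow A k)

section

variable {K : Type*} [Field K]

theorem umbralMul_eq_lsum (L M : Polynomial K → K) :
    umbralMul L M = ⇑(lsum fun n => (LinearMap.id : K →ₗ[K] K).smulRight
      (∑ k ∈ Finset.range (n + 1), (n.choose k : K) * L (X ^ k) * M (X ^ (n - k)))) :=
  rfl

theorem isLinearMap_umbralMul (L M : Polynomial K → K) : IsLinearMap K (umbralMul L M) := by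
  rw [umbralMul_eq_lsum]
  exact LinearMap.isLinear _

theorem isLinearMap_umbralPow (A : Polynomial K → K) (k : ℕ) :
    IsLinearMap K (umbralPow A k) := by
  cases k with
  | zero => exact (leval (0 : K)).isLinear
  | succ k => exact isLinearMap_umbralMul _ _

theorem umbralMul_X_pow (L M : Polynomial K → K) (n : ℕ) :
    umbralMul L M (X ^ n) =
      ∑ k ∈ Finset.range (n + 1), (n.choose k : K) * L (X ^ k) * M (X ^ (n - k)) := by
  rw [umbralMul, support_X_pow, Finset.sum_singleton, coeff_X_pow_self, one_mul]

section DeltaFunctional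

variable {A : Polynomial K → K}

theorem umbralPow_X_pow_of_lt (hA1 : A 1 = 0) {k n : ℕ} (hn : n < k) :
    umbralPow A k (X ^ n) = 0 := by
  induction k generalizing n with
  | zero => exact absurd hn (Nat.not_lt_zero n)
  | succ k ih =>
    rw [umbralPow, umbralMul_X_pow]
    refine Finset.sum_eq_zero fun j hj => ?_
    rcases Nat.eq_zero_or_pos j with rfl | hj0
    · simp [hA1]
    · have := Finset.mem_range.mp hj
      rw [ih (by omega), mul_zero]

theorem umbralPow_X_pow_self (hA1 : A 1 = 0) (k : ℕ) :
    umbralPow A k (X ^ k) = k.factorial * A X ^ k := by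
  induction k with
  | zero => simp [umbralPow]
  | succ k ih =>
    rw [umbralPow, umbralMul_X_pow, Finset.sum_eq_single 1]
    · rw [Nat.add_sub_cancel, ih, Nat.choose_one_right, pow_one, Nat.factorial_succ]
      push_cast
      ring
    · intro j hj hj1
      rcases Nat.eq_zero_or_pos j with rfl | hj0
      · simp [hA1]
      · have := Finset.mem_range.mp hj
        rw [umbralPow_X_pow_of_lt hA1 (by omega), mul_zero]
    · intro h1
      exact absurd (Finset.mem_range.mpr (by omega)) h1

theorem umbralPow_of_natDegree_le (hA1 : A 1 = 0) {k : ℕ} {f : Polynomial K}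
    (hf : f.natDegree ≤ k) :
    umbralPow A k f = f.coeff k * (k.factorial * A X ^ k) := by
  let Φ := (isLinearMap_umbralPow A k).mk'
  calc umbralPow A k f
      = Φ (∑ n ∈ Finset.range (k + 1), f.coeff n • X ^ n) := by
        simp_rw [smul_X_eq_monomial, ← as_sum_range' f (k + 1) (Nat.lt_succ_of_le hf)]; rfl
    _ = ∑ n ∈ Finset.range (k + 1), f.coeff n * umbralPow A k (X ^ n) := by
        simp [Φ, map_sum]
    _ = f.coeff k * umbralPow A k (X ^ k) := by
        refine Finset.sum_eq_single k (fun n hn hnk => ?_) (by simp)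
        have := Finset.mem_range.mp hn
        rw [umbralPow_X_pow_of_lt hA1 (by omega), mul_zero]
    _ = f.coeff k * (k.factorial * A X ^ k) := by rw [umbralPow_X_pow_self hA1]

end DeltaFunctional

end

/-- A polynomial is uniquely determined by the values `A^k f` of the umbral
powers of a delta functional `A` (i.e. `A 1 = 0`, `A X ≠ 0`). -/
theorem deltaFunctional_powers_determine {K : Type*} [Field K] [CharZero K]
    (A : Polynomial K →ₗ[K] K) (hA1 : A 1 = 0) (hAX : A X ≠ 0)
    (f g : Polynomial K) (h : ∀ k : ℕ, umbralPow (⇑A) k f = umbralPow (⇑A) k g) :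
    f = g := by
  rw [← sub_eq_zero]
  by_contra hfg
  have hvanish : umbralPow A (f - g).natDegree (f - g) = 0 := by
    rw [(isLinearMap_umbralPow (⇑A) _).map_sub, h, sub_self]
  rw [umbralPow_of_natDegree_le hA1 le_rfl] at hvanish
  exact mul_ne_zero (leadingCoeff_ne_zero.mpr hfg)
    (mul_ne_zero (Nat.cast_ne_zero.mpr (Nat.factorial_ne_zero _)) (pow_ne_zero _ hAX)) hvanish
end
end

section
/- For a finite simple graph G with vertex set V, the chromatic polynomial set map χ, defined by χ_S(x) = chromatic polynomial of the induced subgraph G|_S, is of binomial type: χ_S(x+y) = ∑_{T ⊎ U = S} χ_T(x) χ_U(y) for every S ⊆ V. -/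
open scoped Classical
open Polynomial

noncomputable section

/-- The number of proper colorings of the subgraph of `G` induced by `S`
with `n` colors. -/
def numProperColorings {V : Type*} (G : SimpleGraph V) (S : Finset V) (n : ℕ) : ℕ :=
  Nat.card {c : {v // v ∈ S} → Fin n // ∀ u v : {v // v ∈ S},
    G.Adj u.1 v.1 → c u ≠ c v}

section Combinatorial

variable {V : Type*} [DecidableEq V] (G : SimpleGraph V)

/-- Proper colorings of `G|S` with `k` colors. -/
def Col (S : Finset V) (k : ℕ) : Type _ :=
  {c : {v // v ∈ S} → Fin k // ∀ u v : {v // v ∈ S}, G.Adj u.1 v.1 → c u ≠ c v}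

variable {G}

/-- The set of vertices colored with "small" colors. -/
def Tof {S : Finset V} {m n : ℕ} (c : Col G S (m + n)) : Finset V :=
  S.filter (fun v => ∃ h : v ∈ S, ((c.1 ⟨v, h⟩ : Fin (m + n)) : ℕ) < m)

lemma mem_Tof {S : Finset V} {m n : ℕ} (c : Col G S (m + n)) (v : {v // v ∈ S}) :
    v.1 ∈ Tof c ↔ (c.1 v : ℕ) < m := by
  constructor
  · intro h
    obtain ⟨h', hlt⟩ := (Finset.mem_filter.1 h).2
    exact hlt
  · intro h
    exact Finset.mem_filter.2 ⟨v.2, v.2, h⟩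

lemma mem_T_iff {S : Finset V} {m n : ℕ} {T : Finset V} (c : Col G S (m + n))
    (hc : Tof c = T) (v : {v // v ∈ S}) : v.1 ∈ T ↔ (c.1 v : ℕ) < m := by
  rw [← hc]; exact mem_Tof c v

lemma Tof_subset {S : Finset V} {m n : ℕ} (c : Col G S (m + n)) : Tof c ⊆ S :=
  S.filter_subset _

/-- The fiber of `Tof` over `T` is in bijection with pairs of colorings. -/
def fiberEquiv (S : Finset V) (m n : ℕ) (T : Finset V) (hTS : T ⊆ S) :
    {c : Col G S (m + n) // Tof c = T} ≃ Col G T m × Col G (S \ T) n where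
  toFun c :=
    (⟨fun u =>
        ⟨(c.1.1 ⟨u.1, hTS u.2⟩ : ℕ), by
          exact (mem_T_iff c.1 c.2 ⟨u.1, hTS u.2⟩).1 u.2⟩, by
        intro u v hadj heq
        apply c.1.2 ⟨u.1, hTS u.2⟩ ⟨v.1, hTS v.2⟩ hadj
        have hval := congrArg Fin.val heq
        exact Fin.ext hval⟩,
     ⟨fun u =>
        have huS : u.1 ∈ S := (Finset.mem_sdiff.1 u.2).1
        ⟨(c.1.1 ⟨u.1, huS⟩ : ℕ) - m, by
          have hge : ¬ ((c.1.1 ⟨u.1, huS⟩ : Fin (m+n)) : ℕ) < m := by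
            intro hlt
            exact (Finset.mem_sdiff.1 u.2).2 ((mem_T_iff c.1 c.2 ⟨u.1, huS⟩).2 hlt)
          have h2 := (c.1.1 ⟨u.1, huS⟩).2
          omega⟩, by
        intro u v hadj heq
        have huS : u.1 ∈ S := (Finset.mem_sdiff.1 u.2).1
        have hvS : v.1 ∈ S := (Finset.mem_sdiff.1 v.2).1
        apply c.1.2 ⟨u.1, huS⟩ ⟨v.1, hvS⟩ hadj
        have hval := congrArg Fin.val heq
        simp only at hval
        have hgu : ¬ ((c.1.1 ⟨u.1, huS⟩ : Fin (m+n)) : ℕ) < m := by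
          intro hlt
          exact (Finset.mem_sdiff.1 u.2).2 ((mem_T_iff c.1 c.2 ⟨u.1, huS⟩).2 hlt)
        have hgv : ¬ ((c.1.1 ⟨v.1, hvS⟩ : Fin (m+n)) : ℕ) < m := by
          intro hlt
          exact (Finset.mem_sdiff.1 v.2).2 ((mem_T_iff c.1 c.2 ⟨v.1, hvS⟩).2 hlt)
        exact Fin.ext (by omega)⟩)
  invFun p :=
    ⟨⟨fun v =>
      if h : v.1 ∈ T then
        ⟨(p.1.1 ⟨v.1, h⟩ : ℕ), Nat.lt_of_lt_of_le (p.1.1 ⟨v.1, h⟩).2 (Nat.le_add_right m n)⟩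
      else
        ⟨m + (p.2.1 ⟨v.1, Finset.mem_sdiff.2 ⟨v.2, h⟩⟩ : ℕ), by
          have := (p.2.1 ⟨v.1, Finset.mem_sdiff.2 ⟨v.2, h⟩⟩).2; omega⟩, by
      intro u v hadj heq
      by_cases hu : u.1 ∈ T <;> by_cases hv : v.1 ∈ T <;>
        simp only [hu, hv, dif_pos, dif_neg, not_false_iff, Fin.mk.injEq] at heq
      · exact p.1.2 ⟨u.1, hu⟩ ⟨v.1, hv⟩ hadj (Fin.ext heq)
      · have := (p.1.1 ⟨u.1, hu⟩).2; omega
      · have := (p.1.1 ⟨v.1, hv⟩).2; omega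
      · exact p.2.2 ⟨u.1, Finset.mem_sdiff.2 ⟨u.2, hu⟩⟩ ⟨v.1, Finset.mem_sdiff.2 ⟨v.2, hv⟩⟩ hadj
          (Fin.ext (by omega))⟩, by
      ext w
      simp only [Tof, Finset.mem_filter]
      constructor
      · rintro ⟨hwS, h', hlt⟩
        by_contra hwT
        simp only [hwT, dif_neg, not_false_iff] at hlt
        omega
      · intro hwT
        refine ⟨hTS hwT, hTS hwT, ?_⟩
        simp only [hwT, dif_pos]
        exact (p.1.1 ⟨w, hwT⟩).2⟩
  left_inv := by
    rintro ⟨⟨c, hc⟩, hT⟩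
    apply Subtype.ext
    apply Subtype.ext
    funext v
    apply Fin.ext
    show (if h : v.1 ∈ T then _ else _ : Fin (m + n)).1 = _
    by_cases h : v.1 ∈ T
    · simp only [h, dif_pos]
    · simp only [h, dif_neg, not_false_iff]
      have hge : ¬ ((c v : Fin (m+n)) : ℕ) < m :=
        fun hlt => h ((mem_T_iff (G := G) ⟨c, hc⟩ hT v).2 hlt)
      show m + (((c v : Fin (m+n)) : ℕ) - m) = ((c v : Fin (m+n)) : ℕ)
      omega
  right_inv := by
    rintro ⟨⟨cT, hcT⟩, ⟨cU, hcU⟩⟩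
    apply Prod.ext
    · apply Subtype.ext
      funext u
      apply Fin.ext
      show ((if h : u.1 ∈ T then _ else _ : Fin (m + n)) : ℕ) = _
      simp only [u.2, dif_pos]
    · apply Subtype.ext
      funext u
      apply Fin.ext
      have hu : u.1 ∉ T := (Finset.mem_sdiff.1 u.2).2
      show ((if h : u.1 ∈ T then _ else _ : Fin (m + n)) : ℕ) - m = _
      simp only [hu, dif_neg, not_false_iff]
      show m + ((cU u : Fin n) : ℕ) - m = ((cU u : Fin n) : ℕ)
      omega

instance (S : Finset V) (k : ℕ) : Finite (Col G S k) := Subtype.finite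

lemma numProperColorings_eq (G : SimpleGraph V) (S : Finset V) (k : ℕ) :
    numProperColorings G S k = Nat.card (Col G S k) := rfl

lemma natCard_sigma {ι : Type*} [Fintype ι] (β : ι → Type*) [∀ i, Finite (β i)] :
    Nat.card (Σ i, β i) = ∑ i, Nat.card (β i) := by
  letI : ∀ i, Fintype (β i) := fun i => Fintype.ofFinite _
  simp [Nat.card_eq_fintype_card, Fintype.card_sigma]

lemma card_split (G : SimpleGraph V) (S : Finset V) (m n : ℕ) :
    numProperColorings G S (m + n) =
      ∑ T ∈ S.powerset, numProperColorings G T m * numProperColorings G (S \ T) n := by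
  rw [numProperColorings_eq (G := G)]
  set f : Col G S (m + n) → {T // T ∈ S.powerset} :=
    fun c => ⟨Tof c, Finset.mem_powerset.2 (Tof_subset c)⟩ with hf
  rw [Nat.card_congr (Equiv.sigmaFiberEquiv f).symm, natCard_sigma]
  rw [← Finset.sum_coe_sort S.powerset
    (fun T => numProperColorings G T m * numProperColorings G (S \ T) n)]
  refine Finset.sum_congr rfl ?_
  rintro ⟨T, hT⟩ -
  have e1 : {c // f c = ⟨T, hT⟩} ≃ {c : Col G S (m + n) // Tof c = T} :=
    Equiv.subtypeEquivRight (fun c => by simp [hf, Subtype.ext_iff])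
  rw [Nat.card_congr (e1.trans (fiberEquiv S m n T (Finset.mem_powerset.1 hT))),
    Nat.card_prod]
  rfl

end Combinatorial

lemma poly_ext_of_pos_nat {p q : Polynomial ℚ}
    (h : ∀ k : ℕ, 0 < k → p.eval (k : ℚ) = q.eval (k : ℚ)) : p = q := by
  have hz : p - q = 0 := by
    apply Polynomial.eq_zero_of_infinite_isRoot
    apply Set.infinite_of_injective_forall_mem (f := fun k : ℕ => ((k + 1 : ℕ) : ℚ))
    · intro a b hab
      have := Nat.cast_injective (R := ℚ) hab
      omega
    · intro k
      simp only [Set.mem_setOf_eq, Polynomial.IsRoot, Polynomial.eval_sub]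
      rw [h (k + 1) (Nat.succ_pos k)]
      ring
  have := sub_eq_zero.1 hz
  exact this

/-- The chromatic polynomial set map of a finite simple graph is of binomial
type: `χ_S(x+y) = ∑_{T ⊎ U = S} χ_T(x) χ_U(y)`. -/
theorem chromatic_setMap_binomialType {V : Type*} [Fintype V] [DecidableEq V]
    (G : SimpleGraph V) (χ : Finset V → Polynomial ℚ)
    (hχ : ∀ S : Finset V, ∀ n : ℕ, 0 < n →
      (χ S).eval (n : ℚ) = numProperColorings G S n) :
    ∀ S : Finset V, ∀ x y : ℚ,
      (χ S).eval (x + y) = ∑ T ∈ S.powerset, (χ T).eval x * (χ (S \ T)).eval y := by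
  intro S x y
  have hint : ∀ a b : ℕ, 0 < a → 0 < b → (χ S).eval ((a : ℚ) + b) =
      ∑ T ∈ S.powerset, (χ T).eval (a : ℚ) * (χ (S \ T)).eval (b : ℚ) := by
    intro a b ha hb
    have hcast : ((a : ℚ) + b) = ((a + b : ℕ) : ℚ) := by push_cast; ring
    rw [hcast, hχ S (a + b) (by omega), card_split G S a b]
    push_cast
    refine Finset.sum_congr rfl ?_
    intro T hT
    rw [hχ T a ha, hχ (S \ T) b hb]
  have hstep1 : ∀ x : ℚ, ∀ b : ℕ, 0 < b → (χ S).eval (x + b) =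
      ∑ T ∈ S.powerset, (χ T).eval x * (χ (S \ T)).eval (b : ℚ) := by
    intro x b hb
    have hpoly : (χ S).comp (Polynomial.X + Polynomial.C (b : ℚ)) =
        ∑ T ∈ S.powerset, χ T * Polynomial.C ((χ (S \ T)).eval (b : ℚ)) := by
      apply poly_ext_of_pos_nat
      intro a ha
      simp only [Polynomial.eval_comp, Polynomial.eval_add, Polynomial.eval_X,
        Polynomial.eval_C, Polynomial.eval_finset_sum, Polynomial.eval_mul]
      exact hint a b ha hb
    have := congrArg (Polynomial.eval x) hpoly
    simpa only [Polynomial.eval_comp, Polynomial.eval_add, Polynomial.eval_X,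
      Polynomial.eval_C, Polynomial.eval_finset_sum, Polynomial.eval_mul] using this
  have hpoly2 : (χ S).comp (Polynomial.C x + Polynomial.X) =
      ∑ T ∈ S.powerset, Polynomial.C ((χ T).eval x) * χ (S \ T) := by
    apply poly_ext_of_pos_nat
    intro b hb
    simp only [Polynomial.eval_comp, Polynomial.eval_add, Polynomial.eval_X,
      Polynomial.eval_C, Polynomial.eval_finset_sum, Polynomial.eval_mul]
    exact hstep1 x b hb
  have := congrArg (Polynomial.eval y) hpoly2
  simpa only [Polynomial.eval_comp, Polynomial.eval_add, Polynomial.eval_X,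
    Polynomial.eval_C, Polynomial.eval_finset_sum, Polynomial.eval_mul] using this
end
end

section
/- For positive integers n, k with 1 ≤ k ≤ n, and a set partition π with n blocks of a finite set S: (n−1 choose k−1)·|S|^{n−k} = ∑_{γ ⊢ π, ℓ(γ)=k} ∏_{ρ ∈ γ} ‖ρ‖^{ℓ(ρ)−1}, where the sum is over set partitions γ of the set of blocks π into k classes, ℓ(ρ) is the number of blocks of π in class ρ, and ‖ρ‖ is the total number of elements of S contained in the blocks of ρ. -/
open scoped Classical

noncomputable section

namespace TF

variable {α : Type*} [DecidableEq α]

variable {α : Type*} [DecidableEq α]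

lemma mem_partitions {S : Finset α} {γ : Finset (Finset α)} :
    γ ∈ partitions S ↔ (∀ T ∈ γ, T ≠ ∅) ∧ γ.sup id = S ∧
      ∀ T ∈ γ, ∀ U ∈ γ, T ≠ U → Disjoint T U := by
  unfold partitions
  simp only [Finset.mem_filter, Finset.mem_powerset]
  constructor
  · rintro ⟨-, h⟩; exact h
  · rintro ⟨h1, h2, h3⟩
    refine ⟨fun T hT => ?_, h1, h2, h3⟩
    simp only [Finset.mem_powerset]
    exact h2 ▸ Finset.le_sup (f := id) hT

lemma filter_card_one {S : Finset α} (hS : S.Nonempty) :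
    (partitions S).filter (fun γ => γ.card = 1) = {{S}} := by
  ext γ
  simp only [Finset.mem_filter, Finset.mem_singleton]
  constructor
  · rintro ⟨hγ, hc⟩
    obtain ⟨T, rfl⟩ := Finset.card_eq_one.1 hc
    obtain ⟨-, h2, -⟩ := mem_partitions.1 hγ
    simp only [Finset.sup_singleton, id] at h2
    rw [h2]
  · rintro rfl
    refine ⟨mem_partitions.2 ⟨?_, ?_, ?_⟩, Finset.card_singleton _⟩
    · intro T hT; simp only [Finset.mem_singleton] at hT; subst hT
      exact Finset.nonempty_iff_ne_empty.1 hS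
    · simp
    · intro T hT U hU hTU
      simp only [Finset.mem_singleton] at hT hU; subst hT; subst hU; exact absurd rfl hTU

lemma filter_card_self {S : Finset α} :
    (partitions S).filter (fun γ => γ.card = S.card)
      = {S.image (fun x => ({x} : Finset α))} := by
  ext γ
  simp only [Finset.mem_filter, Finset.mem_singleton]
  constructor
  · rintro ⟨hγ, hc⟩
    obtain ⟨h1, h2, h3⟩ := mem_partitions.1 hγ
    have hsum : ∑ ρ ∈ γ, ρ.card = S.card := by
      rw [← h2, Finset.sup_eq_biUnion]
      exact (Finset.card_biUnion (fun T hT U hU hTU => h3 T hT U hU hTU)).symm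
    have hone : ∀ ρ ∈ γ, ρ.card = 1 := by
      by_contra hx
      push_neg at hx
      obtain ⟨ρ, hρ, hρ1⟩ := hx
      have h2le : 2 ≤ ρ.card :=
        lt_of_le_of_ne (Finset.card_pos.2 (Finset.nonempty_of_ne_empty (h1 ρ hρ))) (Ne.symm hρ1)
      have : γ.card + 1 ≤ ∑ ρ ∈ γ, ρ.card := by
        calc γ.card + 1 = (∑ _ρ ∈ γ.erase ρ, 1) + 2 := by
              rw [Finset.sum_const, smul_eq_mul, mul_one, Finset.card_erase_of_mem hρ]
              have := Finset.card_pos.2 ⟨ρ, hρ⟩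
              omega
          _ ≤ (∑ σ ∈ γ.erase ρ, σ.card) + ρ.card := by
              gcongr with σ hσ
              exact Finset.card_pos.2
                (Finset.nonempty_of_ne_empty (h1 σ (Finset.mem_of_mem_erase hσ)))
          _ = ∑ ρ ∈ γ, ρ.card := Finset.sum_erase_add _ _ hρ
      omega
    apply Finset.eq_of_subset_of_card_le
    · intro ρ hρ
      obtain ⟨x, rfl⟩ := Finset.card_eq_one.1 (hone ρ hρ)
      have hxS : x ∈ S := by
        have : ({x} : Finset α) ⊆ S := h2 ▸ Finset.le_sup (f := id) hρ
        exact this (Finset.mem_singleton_self x)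
      exact Finset.mem_image_of_mem _ hxS
    · rw [Finset.card_image_of_injective _ Finset.singleton_injective, ← hc]
  · rintro rfl
    have hcard : (S.image (fun x => ({x} : Finset α))).card = S.card :=
      Finset.card_image_of_injective _ Finset.singleton_injective
    refine ⟨mem_partitions.2 ⟨?_, ?_, ?_⟩, hcard⟩
    · intro T hT
      obtain ⟨x, -, rfl⟩ := Finset.mem_image.1 hT
      simp
    · apply Finset.Subset.antisymm
      · intro x hx
        simp only [Finset.mem_sup, Finset.mem_image, id] at hx
        obtain ⟨T, ⟨y, hy, rfl⟩, hxT⟩ := hx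
        simp only [Finset.mem_singleton] at hxT; subst hxT; exact hy
      · intro x hx
        have : ({x} : Finset α) ∈ S.image (fun x => ({x} : Finset α)) :=
          Finset.mem_image_of_mem _ hx
        exact (Finset.le_sup (f := id) this) (Finset.mem_singleton_self x)
    · intro T hT U hU hTU
      obtain ⟨x, -, rfl⟩ := Finset.mem_image.1 hT
      obtain ⟨y, -, rfl⟩ := Finset.mem_image.1 hU
      simp only [Finset.disjoint_singleton_left, Finset.mem_singleton]
      intro h; exact hTU (by rw [h])


lemma pair_part {ρ : Finset α} {δ : Finset (Finset α)} (hδ : δ ∈ partitions ρ)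
    (hc : δ.card = 2) {σ : Finset α} (hσ : σ ∈ δ) :
    σ ≠ ∅ ∧ σ ⊆ ρ ∧ σ ≠ ρ ∧ σ ≠ ρ \ σ ∧ δ = {σ, ρ \ σ} := by
  obtain ⟨h1, h2, h3⟩ := mem_partitions.1 hδ
  obtain ⟨T, U, hTU, rfl⟩ := Finset.card_eq_two.1 hc
  have key : ∀ σ' τ : Finset α, ({σ', τ} : Finset (Finset α)) = {T, U} → σ' ≠ τ →
      τ = ρ \ σ' := by
    intro σ' τ heq hne
    have hσ'τ : Disjoint σ' τ := by
      have hσ'm : σ' ∈ ({T, U} : Finset (Finset α)) := by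
        rw [← heq]; exact Finset.mem_insert_self _ _
      have hτm : τ ∈ ({T, U} : Finset (Finset α)) := by
        rw [← heq]; simp
      exact h3 σ' hσ'm τ hτm hne
    have hsup : σ' ∪ τ = ρ := by
      rw [← h2, ← heq]
      simp [Finset.sup_insert, Finset.sup_singleton]
    ext x
    simp only [Finset.mem_sdiff]
    constructor
    · intro hx
      exact ⟨hsup ▸ Finset.mem_union_right _ hx,
        fun hxσ => (Finset.disjoint_left.1 hσ'τ) hxσ hx⟩
    · rintro ⟨hxρ, hxσ⟩
      rcases Finset.mem_union.1 (hsup ▸ hxρ : x ∈ σ' ∪ τ) with h | h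
      · exact absurd h hxσ
      · exact h
  have hσmem := hσ
  rw [Finset.mem_insert, Finset.mem_singleton] at hσmem
  have hrest : ∃ τ, σ ≠ τ ∧ ({σ, τ} : Finset (Finset α)) = {T, U} := by
    rcases hσmem with rfl | rfl
    · exact ⟨U, hTU, rfl⟩
    · exact ⟨T, hTU.symm, Finset.pair_comm _ _⟩
  obtain ⟨τ, hne, heq⟩ := hrest
  have hτ := key σ τ heq hne
  subst hτ
  have hσne : σ ≠ ∅ := h1 σ hσ
  have hσρ : σ ⊆ ρ := by
    have := h2 ▸ Finset.le_sup (f := id) hσ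
    exact this
  have hτmem : ρ \ σ ∈ ({T, U} : Finset (Finset α)) := by rw [← heq]; simp
  have hτne : ρ \ σ ≠ ∅ := h1 _ hτmem
  exact ⟨hσne, hσρ, fun h => hτne (by rw [h, Finset.sdiff_self]), hne, heq.symm⟩

end TF

namespace TF2
open TF
variable {α : Type*} [DecidableEq α]

lemma splits_sum (w : α → ℕ) (ρ : Finset α) :
    ∑ s ∈ ρ.powerset.filter (fun s => s ≠ ∅ ∧ s ≠ ρ),
        (∑ x ∈ s, w x) ^ (s.card - 1) * (∑ x ∈ ρ \ s, w x) ^ ((ρ \ s).card - 1)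
      = ∑ δ ∈ (partitions ρ).filter (fun δ => δ.card = 2),
          2 * ∏ σ ∈ δ, (∑ x ∈ σ, w x) ^ (σ.card - 1) := by
  have hrhs : ∀ δ ∈ (partitions ρ).filter (fun δ => δ.card = 2),
      2 * ∏ σ ∈ δ, (∑ x ∈ σ, w x) ^ (σ.card - 1)
        = ∑ σ ∈ δ, (∑ x ∈ σ, w x) ^ (σ.card - 1)
            * (∑ x ∈ ρ \ σ, w x) ^ ((ρ \ σ).card - 1) := by
    intro δ hδ
    rw [Finset.mem_filter] at hδ
    obtain ⟨hδp, hδc⟩ := hδ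
    obtain ⟨T, U, hTU, rfl⟩ := Finset.card_eq_two.1 hδc
    have hT := pair_part hδp hδc (Finset.mem_insert_self T {U})
    obtain ⟨-, hTρ, -, hTs, hpair⟩ := hT
    have hU : U = ρ \ T := by
      have : U ∈ ({T, ρ \ T} : Finset (Finset α)) := hpair ▸ (by simp)
      rcases Finset.mem_insert.1 this with h | h
      · exact absurd h.symm hTU
      · exact Finset.mem_singleton.1 h
    subst hU
    have hback : ρ \ (ρ \ T) = T := Finset.sdiff_sdiff_eq_self hTρ
    rw [Finset.sum_pair hTs, Finset.prod_pair hTs, hback]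
    ring
  rw [Finset.sum_congr rfl hrhs, Finset.sum_sigma']
  refine Finset.sum_nbij' (fun s => ⟨{s, ρ \ s}, s⟩) (fun x => x.2) ?_ ?_ ?_ ?_ ?_
  · intro s hs
    simp only [Finset.mem_filter, Finset.mem_powerset] at hs
    obtain ⟨hsρ, hsne, hsρ'⟩ := hs
    have hdne : ρ \ s ≠ ∅ := by
      intro h
      exact hsρ' (Finset.Subset.antisymm hsρ (Finset.sdiff_eq_empty_iff_subset.1 h))
    have hdisj : Disjoint s (ρ \ s) := Finset.disjoint_sdiff
    have hne2 : s ≠ ρ \ s := by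
      intro h
      have : Disjoint s s := by nth_rewrite 2 [h]; exact hdisj
      exact hsne (disjoint_self.1 this)
    simp only [Finset.mem_sigma, Finset.mem_filter]
    refine ⟨⟨mem_partitions.2 ⟨?_, ?_, ?_⟩, Finset.card_pair hne2⟩, Finset.mem_insert_self _ _⟩
    · intro X hX
      rcases Finset.mem_insert.1 hX with rfl | hX
      · exact hsne
      · rw [Finset.mem_singleton.1 hX]; exact hdne
    · simp only [Finset.sup_insert, Finset.sup_singleton, id]
      exact Finset.union_sdiff_of_subset hsρ
    · intro X hX Y hY hXY
      rcases Finset.mem_insert.1 hX with rfl | hX <;>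
        rcases Finset.mem_insert.1 hY with rfl | hY
      · exact absurd rfl hXY
      · rw [Finset.mem_singleton.1 hY]; exact hdisj
      · rw [Finset.mem_singleton.1 hX]; exact hdisj.symm
      · rw [Finset.mem_singleton.1 hX, Finset.mem_singleton.1 hY] at hXY
        exact absurd rfl hXY
  · rintro ⟨δ, σ⟩ hx
    simp only [Finset.mem_sigma, Finset.mem_filter] at hx
    obtain ⟨⟨hδp, hδc⟩, hσ⟩ := hx
    obtain ⟨h1, h2, h3, -, -⟩ := pair_part hδp hδc hσ
    simp only [Finset.mem_filter, Finset.mem_powerset]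
    exact ⟨h2, h1, h3⟩
  · intro s hs; rfl
  · rintro ⟨δ, σ⟩ hx
    simp only [Finset.mem_sigma, Finset.mem_filter] at hx
    obtain ⟨⟨hδp, hδc⟩, hσ⟩ := hx
    obtain ⟨-, -, -, -, hpair⟩ := pair_part hδp hδc hσ
    exact Sigma.ext (by simp [hpair]) (by simp)
  · intro s hs; rfl

end TF2

namespace TF

variable {α : Type*} [DecidableEq α]

lemma sum_sum {S : Finset α} {γ : Finset (Finset α)} (hγ : γ ∈ partitions S)
    (f : α → ℕ) : ∑ ρ ∈ γ, ∑ x ∈ ρ, f x = ∑ x ∈ S, f x := by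
  obtain ⟨h1, h2, h3⟩ := mem_partitions.1 hγ
  rw [← h2, Finset.sup_eq_biUnion]
  exact (Finset.sum_biUnion (fun T hT U hU hTU => h3 T hT U hU hTU)).symm

lemma sum_card {S : Finset α} {γ : Finset (Finset α)} (hγ : γ ∈ partitions S) :
    ∑ ρ ∈ γ, ρ.card = S.card := by
  simpa using sum_sum hγ (fun _ => 1)

lemma one_le_card_of_mem {S : Finset α} {γ : Finset (Finset α)} (hγ : γ ∈ partitions S)
    {T : Finset α} (hT : T ∈ γ) : 1 ≤ T.card :=
  Finset.card_pos.2 (Finset.nonempty_of_ne_empty ((mem_partitions.1 hγ).1 T hT))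

lemma notMem_erase_of_subset {A : Finset α} {γ : Finset (Finset α)}
    (hγ : γ ∈ partitions A) {ρ t : Finset α} (hρ : ρ ∈ γ) (ht : t ≠ ∅)
    (hsub : t ⊆ ρ) : t ∉ γ.erase ρ := by
  intro h
  obtain ⟨-, -, h3⟩ := mem_partitions.1 hγ
  have hd := h3 t (Finset.mem_of_mem_erase h) ρ hρ (Finset.ne_of_mem_erase h)
  obtain ⟨x, hx⟩ := Finset.nonempty_of_ne_empty ht
  exact Finset.disjoint_left.1 hd hx (hsub hx)

lemma split_part {A : Finset α} {γ : Finset (Finset α)} (hγ : γ ∈ partitions A)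
    {ρ s t : Finset α} (hρ : ρ ∈ γ) (hs : s ≠ ∅) (ht : t ≠ ∅)
    (hst : Disjoint s t) (hun : s ∪ t = ρ) :
    insert s (insert t (γ.erase ρ)) ∈ partitions A
    ∧ s ∉ insert t (γ.erase ρ) ∧ t ∉ γ.erase ρ
    ∧ (insert s (insert t (γ.erase ρ))).card = γ.card + 1 := by
  obtain ⟨h1, h2, h3⟩ := mem_partitions.1 hγ
  have hsρ : s ⊆ ρ := hun ▸ Finset.subset_union_left
  have htρ : t ⊆ ρ := hun ▸ Finset.subset_union_right
  have hsnet : s ≠ t := by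
    intro h
    have : Disjoint t t := by nth_rewrite 1 [← h]; exact hst
    exact ht (disjoint_self.1 this)
  have hsm : s ∉ γ.erase ρ := notMem_erase_of_subset hγ hρ hs hsρ
  have htm : t ∉ γ.erase ρ := notMem_erase_of_subset hγ hρ ht htρ
  have hsin : s ∉ insert t (γ.erase ρ) := by
    simp only [Finset.mem_insert]
    rintro (h | h)
    · exact hsnet h
    · exact hsm h
  have hdisjσ : ∀ σ ∈ γ.erase ρ, Disjoint ρ σ := fun σ hσ =>
    h3 ρ hρ σ (Finset.mem_of_mem_erase hσ) (Ne.symm (Finset.ne_of_mem_erase hσ))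
  refine ⟨mem_partitions.2 ⟨?_, ?_, ?_⟩, hsin, htm, ?_⟩
  · intro T hT
    rcases Finset.mem_insert.1 hT with rfl | hT
    · exact hs
    · rcases Finset.mem_insert.1 hT with rfl | hT
      · exact ht
      · exact h1 T (Finset.mem_of_mem_erase hT)
  · rw [Finset.sup_insert, Finset.sup_insert, ← sup_assoc]
    have hid : (id s : Finset α) ⊔ id t = ρ := by simpa [Finset.sup_eq_union] using hun
    rw [hid]
    have h4 : (insert ρ (γ.erase ρ)).sup id = A := by rw [Finset.insert_erase hρ]; exact h2
    rw [Finset.sup_insert] at h4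
    exact h4
  · have hcase : ∀ X ∈ insert s (insert t (γ.erase ρ)),
        X = s ∨ X = t ∨ X ∈ γ.erase ρ := by
      intro X hX
      rcases Finset.mem_insert.1 hX with rfl | hX
      · exact Or.inl rfl
      · rcases Finset.mem_insert.1 hX with rfl | hX
        · exact Or.inr (Or.inl rfl)
        · exact Or.inr (Or.inr hX)
    intro X hX Y hY hXY
    have hdx : ∀ Z, Z = s ∨ Z = t → Z ⊆ ρ := by rintro Z (rfl | rfl) <;> assumption
    rcases hcase X hX with rfl | rfl | hX' <;> rcases hcase Y hY with rfl | rfl | hY'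
    · exact absurd rfl hXY
    · exact hst
    · exact (hdisjσ Y hY').mono_left hsρ
    · exact hst.symm
    · exact absurd rfl hXY
    · exact (hdisjσ Y hY').mono_left htρ
    · exact ((hdisjσ X hX').mono_left hsρ).symm
    · exact ((hdisjσ X hX').mono_left htρ).symm
    · exact h3 X (Finset.mem_of_mem_erase hX') Y (Finset.mem_of_mem_erase hY') hXY
  · rw [Finset.card_insert_of_notMem hsin, Finset.card_insert_of_notMem htm,
      Finset.card_erase_of_mem hρ]
    have : 1 ≤ γ.card := Finset.card_pos.2 ⟨ρ, hρ⟩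
    omega

lemma merge_part {A : Finset α} {γ : Finset (Finset α)} (hγ : γ ∈ partitions A)
    {ρ1 ρ2 : Finset α} (h1m : ρ1 ∈ γ) (h2m : ρ2 ∈ γ) (hne : ρ1 ≠ ρ2) :
    insert (ρ1 ∪ ρ2) ((γ.erase ρ1).erase ρ2) ∈ partitions A
    ∧ (ρ1 ∪ ρ2) ∉ (γ.erase ρ1).erase ρ2
    ∧ (insert (ρ1 ∪ ρ2) ((γ.erase ρ1).erase ρ2)).card + 1 = γ.card := by
  obtain ⟨h1, h2, h3⟩ := mem_partitions.1 hγ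
  have hmem : ∀ σ, σ ∈ (γ.erase ρ1).erase ρ2 ↔ σ ∈ γ ∧ σ ≠ ρ1 ∧ σ ≠ ρ2 := by
    intro σ; simp only [Finset.mem_erase]; tauto
  have hd1 : ∀ σ ∈ (γ.erase ρ1).erase ρ2, Disjoint (ρ1 ∪ ρ2) σ := by
    intro σ hσ
    obtain ⟨hσγ, hσ1, hσ2⟩ := (hmem σ).1 hσ
    exact Finset.disjoint_union_left.2
      ⟨h3 ρ1 h1m σ hσγ (Ne.symm hσ1), h3 ρ2 h2m σ hσγ (Ne.symm hσ2)⟩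
  have hnm : (ρ1 ∪ ρ2) ∉ (γ.erase ρ1).erase ρ2 := by
    intro h
    have hd := hd1 _ h
    obtain ⟨x, hx⟩ := Finset.nonempty_of_ne_empty (h1 ρ1 h1m)
    exact Finset.disjoint_left.1 hd (Finset.mem_union_left _ hx) (Finset.mem_union_left _ hx)
  have h2e : ρ2 ∈ γ.erase ρ1 := Finset.mem_erase.2 ⟨fun h => hne h.symm, h2m⟩
  refine ⟨mem_partitions.2 ⟨?_, ?_, ?_⟩, hnm, ?_⟩
  · intro T hT
    rcases Finset.mem_insert.1 hT with rfl | hT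
    · intro h
      exact h1 ρ1 h1m (Finset.subset_empty.1 (h ▸ Finset.subset_union_left))
    · exact h1 T ((hmem T).1 hT).1
  · rw [Finset.sup_insert]
    have e2 : (insert ρ2 ((γ.erase ρ1).erase ρ2)).sup id = (γ.erase ρ1).sup id := by
      rw [Finset.insert_erase h2e]
    rw [Finset.sup_insert] at e2
    have e1 : (insert ρ1 (γ.erase ρ1)).sup id = A := by
      rw [Finset.insert_erase h1m]; exact h2
    rw [Finset.sup_insert] at e1
    have eassoc : (id (ρ1 ∪ ρ2) : Finset α) ⊔ ((γ.erase ρ1).erase ρ2).sup id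
        = id ρ1 ⊔ (id ρ2 ⊔ ((γ.erase ρ1).erase ρ2).sup id) := by
      show (ρ1 ∪ ρ2) ⊔ _ = ρ1 ⊔ (ρ2 ⊔ _)
      exact Finset.union_assoc _ _ _
    rw [eassoc, e2, e1]
  · intro X hX Y hY hXY
    rcases Finset.mem_insert.1 hX with rfl | hX' <;> rcases Finset.mem_insert.1 hY with rfl | hY'
    · exact absurd rfl hXY
    · exact hd1 Y hY'
    · exact (hd1 X hX').symm
    · exact h3 X ((hmem X).1 hX').1 Y ((hmem Y).1 hY').1 hXY
  · rw [Finset.card_insert_of_notMem hnm, Finset.card_erase_of_mem h2e,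
      Finset.card_erase_of_mem h1m]
    have h2' : 2 ≤ γ.card := Finset.one_lt_card.2 ⟨ρ1, h1m, ρ2, h2m, hne⟩
    omega

lemma class_card_lt {A : Finset α} {γ : Finset (Finset α)} (hγ : γ ∈ partitions A)
    (h2 : 2 ≤ γ.card) {ρ : Finset α} (hρ : ρ ∈ γ) : ρ.card < A.card := by
  obtain ⟨σ, hσ, hσρ⟩ := Finset.exists_mem_ne h2 ρ
  have hsub : {ρ, σ} ⊆ γ := by
    intro X hX
    rcases Finset.mem_insert.1 hX with rfl | hX
    · exact hρ
    · rw [Finset.mem_singleton.1 hX]; exact hσ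
  have hsum : ρ.card + σ.card ≤ ∑ τ ∈ γ, τ.card := by
    rw [← Finset.sum_pair (Ne.symm hσρ)]
    exact Finset.sum_le_sum_of_subset hsub
  have hσ1 : 1 ≤ σ.card := one_le_card_of_mem hγ hσ
  rw [sum_card hγ] at hsum
  omega

end TF

namespace TF

variable {α : Type*} [DecidableEq α]

lemma sig_ext {T1 T2 T3 : Type*} {a a' : T1} {b b' : T2} {c c' : T3}
    (h1 : a = a') (h2 : b = b') (h3 : c = c') :
    (⟨a, b, c⟩ : Σ _ : T1, Σ _ : T2, T3) = ⟨a', b', c'⟩ := by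
  subst h1; subst h2; subst h3; rfl

lemma exchange {A : Finset α} (w : α → ℕ) (k : ℕ) :
    ∑ γ ∈ (partitions A).filter (fun γ => γ.card = k), ∑ ρ ∈ γ,
      ∑ s ∈ ρ.powerset.filter (fun s => s ≠ ∅ ∧ s ≠ ρ),
        (∑ x ∈ ρ, w x) *
          ((∑ x ∈ s, w x) ^ (s.card - 1) * (∑ x ∈ ρ \ s, w x) ^ ((ρ \ s).card - 1)
            * ∏ σ ∈ γ.erase ρ, (∑ x ∈ σ, w x) ^ (σ.card - 1))
    = ∑ γ ∈ (partitions A).filter (fun γ => γ.card = k + 1), ∑ ρ1 ∈ γ, ∑ ρ2 ∈ γ.erase ρ1,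
        (∑ x ∈ ρ1 ∪ ρ2, w x) * ∏ σ ∈ γ, (∑ x ∈ σ, w x) ^ (σ.card - 1) := by
  have hL : ∑ γ ∈ (partitions A).filter (fun γ => γ.card = k), ∑ ρ ∈ γ,
      ∑ s ∈ ρ.powerset.filter (fun s => s ≠ ∅ ∧ s ≠ ρ),
        (∑ x ∈ ρ, w x) *
          ((∑ x ∈ s, w x) ^ (s.card - 1) * (∑ x ∈ ρ \ s, w x) ^ ((ρ \ s).card - 1)
            * ∏ σ ∈ γ.erase ρ, (∑ x ∈ σ, w x) ^ (σ.card - 1))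
      = ∑ x ∈ ((partitions A).filter (fun γ => γ.card = k)).sigma
          (fun γ => γ.sigma (fun ρ => ρ.powerset.filter (fun s => s ≠ ∅ ∧ s ≠ ρ))),
          (∑ y ∈ x.2.1, w y) *
            ((∑ y ∈ x.2.2, w y) ^ (x.2.2.card - 1)
              * (∑ y ∈ x.2.1 \ x.2.2, w y) ^ ((x.2.1 \ x.2.2).card - 1)
              * ∏ σ ∈ x.1.erase x.2.1, (∑ y ∈ σ, w y) ^ (σ.card - 1)) := by
    rw [Finset.sum_sigma]
    exact Finset.sum_congr rfl (fun γ _ => by rw [Finset.sum_sigma])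
  have hR : ∑ γ ∈ (partitions A).filter (fun γ => γ.card = k + 1), ∑ ρ1 ∈ γ,
      ∑ ρ2 ∈ γ.erase ρ1,
        (∑ x ∈ ρ1 ∪ ρ2, w x) * ∏ σ ∈ γ, (∑ x ∈ σ, w x) ^ (σ.card - 1)
      = ∑ x ∈ ((partitions A).filter (fun γ => γ.card = k + 1)).sigma
          (fun γ => γ.sigma (fun ρ1 => γ.erase ρ1)),
          (∑ y ∈ x.2.1 ∪ x.2.2, w y) * ∏ σ ∈ x.1, (∑ y ∈ σ, w y) ^ (σ.card - 1) := by
    rw [Finset.sum_sigma]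
    exact Finset.sum_congr rfl (fun γ _ => by rw [Finset.sum_sigma])
  rw [hL, hR]
  refine Finset.sum_nbij'
    (fun x => ⟨insert x.2.2 (insert (x.2.1 \ x.2.2) (x.1.erase x.2.1)), x.2.2, x.2.1 \ x.2.2⟩)
    (fun y => ⟨insert (y.2.1 ∪ y.2.2) ((y.1.erase y.2.1).erase y.2.2), y.2.1 ∪ y.2.2, y.2.1⟩)
    ?_ ?_ ?_ ?_ ?_
  · rintro ⟨γ, ρ, s⟩ hx
    simp only [Finset.mem_sigma, Finset.mem_filter, Finset.mem_powerset] at hx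
    obtain ⟨⟨hγp, hγc⟩, hρ, hsρ, hsne, hsnρ⟩ := hx
    have hdne : ρ \ s ≠ ∅ := fun h =>
      hsnρ (Finset.Subset.antisymm hsρ (Finset.sdiff_eq_empty_iff_subset.1 h))
    have hdisj : Disjoint s (ρ \ s) := Finset.disjoint_sdiff
    have hun : s ∪ (ρ \ s) = ρ := Finset.union_sdiff_of_subset hsρ
    obtain ⟨hp, hs1, hs2, hcard⟩ := split_part hγp hρ hsne hdne hdisj hun
    have hne2 : (ρ \ s) ≠ s := by
      intro h
      have : Disjoint s s := by nth_rewrite 2 [← h]; exact hdisj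
      exact hsne (disjoint_self.1 this)
    simp only [Finset.mem_sigma, Finset.mem_filter]
    refine ⟨⟨hp, by rw [hcard, hγc]⟩, Finset.mem_insert_self _ _, ?_⟩
    exact Finset.mem_erase.2 ⟨hne2, Finset.mem_insert_of_mem (Finset.mem_insert_self _ _)⟩
  · rintro ⟨γ, ρ1, ρ2⟩ hy
    simp only [Finset.mem_sigma, Finset.mem_filter, Finset.mem_erase] at hy
    obtain ⟨⟨hγp, hγc⟩, hρ1, hne, hρ2⟩ := hy
    obtain ⟨hp, hnm, hcard⟩ := merge_part hγp hρ1 hρ2 (Ne.symm hne)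
    simp only [Finset.mem_sigma, Finset.mem_filter, Finset.mem_powerset]
    refine ⟨⟨hp, by omega⟩, Finset.mem_insert_self _ _, Finset.subset_union_left, ?_, ?_⟩
    · exact (mem_partitions.1 hγp).1 ρ1 hρ1
    · intro h
      have h2ne : ρ2 ≠ ∅ := (mem_partitions.1 hγp).1 ρ2 hρ2
      have hd := (mem_partitions.1 hγp).2.2 ρ1 hρ1 ρ2 hρ2 (Ne.symm hne)
      obtain ⟨x, hx⟩ := Finset.nonempty_of_ne_empty h2ne
      have : x ∈ ρ1 := h ▸ Finset.mem_union_right _ hx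
      exact Finset.disjoint_left.1 hd this hx
  · rintro ⟨γ, ρ, s⟩ hx
    simp only [Finset.mem_sigma, Finset.mem_filter, Finset.mem_powerset] at hx
    obtain ⟨⟨hγp, hγc⟩, hρ, hsρ, hsne, hsnρ⟩ := hx
    have hdne : ρ \ s ≠ ∅ := fun h =>
      hsnρ (Finset.Subset.antisymm hsρ (Finset.sdiff_eq_empty_iff_subset.1 h))
    have hdisj : Disjoint s (ρ \ s) := Finset.disjoint_sdiff
    have hun : s ∪ (ρ \ s) = ρ := Finset.union_sdiff_of_subset hsρ
    obtain ⟨hp, hs1, hs2, hcard⟩ := split_part hγp hρ hsne hdne hdisj hun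
    refine sig_ext ?_ hun rfl
    rw [Finset.erase_insert hs1, Finset.erase_insert hs2, hun, Finset.insert_erase hρ]
  · rintro ⟨γ, ρ1, ρ2⟩ hy
    simp only [Finset.mem_sigma, Finset.mem_filter, Finset.mem_erase] at hy
    obtain ⟨⟨hγp, hγc⟩, hρ1, hne, hρ2⟩ := hy
    obtain ⟨hp, hnm, hcard⟩ := merge_part hγp hρ1 hρ2 (Ne.symm hne)
    have hd := (mem_partitions.1 hγp).2.2 ρ1 hρ1 ρ2 hρ2 (Ne.symm hne)
    have hsd : (ρ1 ∪ ρ2) \ ρ1 = ρ2 := by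
      rw [Finset.union_sdiff_left]; exact Finset.sdiff_eq_self_of_disjoint hd.symm
    have h2e : ρ2 ∈ γ.erase ρ1 := Finset.mem_erase.2 ⟨hne, hρ2⟩
    refine sig_ext ?_ rfl hsd
    rw [Finset.erase_insert hnm, hsd, Finset.insert_erase h2e, Finset.insert_erase hρ1]
  · rintro ⟨γ, ρ, s⟩ hx
    simp only [Finset.mem_sigma, Finset.mem_filter, Finset.mem_powerset] at hx
    obtain ⟨⟨hγp, hγc⟩, hρ, hsρ, hsne, hsnρ⟩ := hx
    have hdne : ρ \ s ≠ ∅ := fun h =>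
      hsnρ (Finset.Subset.antisymm hsρ (Finset.sdiff_eq_empty_iff_subset.1 h))
    have hdisj : Disjoint s (ρ \ s) := Finset.disjoint_sdiff
    have hun : s ∪ (ρ \ s) = ρ := Finset.union_sdiff_of_subset hsρ
    obtain ⟨hp, hs1, hs2, hcard⟩ := split_part hγp hρ hsne hdne hdisj hun
    show (∑ x ∈ ρ, w x) * _ = (∑ y ∈ s ∪ (ρ \ s), w y) * _
    rw [hun, Finset.prod_insert hs1, Finset.prod_insert hs2]
    ring
end TF

namespace TF

variable {α : Type*} [DecidableEq α]

lemma step {A : Finset α} (w : α → ℕ) {N k : ℕ} (hN : A.card = N) (hk2 : 2 ≤ k)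
    (IHsplit : ∀ ρ : Finset α, ρ.card < N → 2 ≤ ρ.card →
        (ρ.card - 1) * (∑ x ∈ ρ, w x) ^ (ρ.card - 2)
          = ∑ δ ∈ (partitions ρ).filter (fun δ => δ.card = 2),
              ∏ σ ∈ δ, (∑ x ∈ σ, w x) ^ (σ.card - 1)) :
    (N - k) * ∑ γ ∈ (partitions A).filter (fun γ => γ.card = k),
        ∏ ρ ∈ γ, (∑ x ∈ ρ, w x) ^ (ρ.card - 1)
    = k * (∑ x ∈ A, w x) *
        ∑ γ ∈ (partitions A).filter (fun γ => γ.card = k + 1),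
          ∏ ρ ∈ γ, (∑ x ∈ ρ, w x) ^ (ρ.card - 1) := by
  have key := exchange (A := A) w k
  have hLHS : ∑ γ ∈ (partitions A).filter (fun γ => γ.card = k), ∑ ρ ∈ γ,
      ∑ s ∈ ρ.powerset.filter (fun s => s ≠ ∅ ∧ s ≠ ρ),
        (∑ x ∈ ρ, w x) *
          ((∑ x ∈ s, w x) ^ (s.card - 1) * (∑ x ∈ ρ \ s, w x) ^ ((ρ \ s).card - 1)
            * ∏ σ ∈ γ.erase ρ, (∑ x ∈ σ, w x) ^ (σ.card - 1))
      = 2 * ((N - k) * ∑ γ ∈ (partitions A).filter (fun γ => γ.card = k),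
          ∏ ρ ∈ γ, (∑ x ∈ ρ, w x) ^ (ρ.card - 1)) := by
    rw [Finset.mul_sum, Finset.mul_sum]
    refine Finset.sum_congr rfl ?_
    intro γ hγ
    rw [Finset.mem_filter] at hγ
    obtain ⟨hγp, hγc⟩ := hγ
    have hperρ : ∀ ρ ∈ γ,
        ∑ s ∈ ρ.powerset.filter (fun s => s ≠ ∅ ∧ s ≠ ρ),
          (∑ x ∈ ρ, w x) *
            ((∑ x ∈ s, w x) ^ (s.card - 1) * (∑ x ∈ ρ \ s, w x) ^ ((ρ \ s).card - 1)
              * ∏ σ ∈ γ.erase ρ, (∑ x ∈ σ, w x) ^ (σ.card - 1))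
        = 2 * ((ρ.card - 1) * ∏ σ ∈ γ, (∑ x ∈ σ, w x) ^ (σ.card - 1)) := by
      intro ρ hρ
      have hsplits : ∑ s ∈ ρ.powerset.filter (fun s => s ≠ ∅ ∧ s ≠ ρ),
          (∑ x ∈ s, w x) ^ (s.card - 1) * (∑ x ∈ ρ \ s, w x) ^ ((ρ \ s).card - 1)
          = 2 * ((ρ.card - 1) * (∑ x ∈ ρ, w x) ^ (ρ.card - 2)) := by
        rcases Nat.lt_or_ge ρ.card 2 with hc | hc
        · have hc1 : ρ.card = 1 := by
            have := one_le_card_of_mem hγp hρ; omega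
          have hempty : ρ.powerset.filter (fun s => s ≠ ∅ ∧ s ≠ ρ) = ∅ := by
            rw [Finset.eq_empty_iff_forall_notMem]
            intro s hs
            simp only [Finset.mem_filter, Finset.mem_powerset] at hs
            obtain ⟨hsρ, hsne, hsnρ⟩ := hs
            have h1 : 1 ≤ s.card := Finset.card_pos.2 (Finset.nonempty_of_ne_empty hsne)
            have h2 : s.card ≤ ρ.card := Finset.card_le_card hsρ
            exact hsnρ (Finset.eq_of_subset_of_card_le hsρ (by omega))
          rw [hempty, Finset.sum_empty, hc1]
          simp
        · have hlt : ρ.card < N := by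
            rw [← hN]
            exact class_card_lt hγp (by omega) hρ
          rw [TF2.splits_sum w ρ, ← Finset.mul_sum, ← IHsplit ρ hlt hc]
      rw [← Finset.mul_sum, ← Finset.sum_mul, hsplits]
      have hprod : ∏ σ ∈ γ, (∑ x ∈ σ, w x) ^ (σ.card - 1)
          = (∑ x ∈ ρ, w x) ^ (ρ.card - 1) * ∏ σ ∈ γ.erase ρ, (∑ x ∈ σ, w x) ^ (σ.card - 1) :=
        (Finset.mul_prod_erase γ _ hρ).symm
      rw [hprod]
      rcases Nat.lt_or_ge ρ.card 2 with hc | hc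
      · have hc1 : ρ.card = 1 := by
          have := one_le_card_of_mem hγp hρ; omega
        simp [hc1]
      · have hpow : (∑ x ∈ ρ, w x) ^ (ρ.card - 1)
            = (∑ x ∈ ρ, w x) ^ (ρ.card - 2) * (∑ x ∈ ρ, w x) := by
          rw [← pow_succ]; congr 1; omega
        rw [hpow]; ring
    rw [Finset.sum_congr rfl hperρ]
    have hsum1 : ∑ ρ ∈ γ, (ρ.card - 1) = N - k := by
      have h1 : ∑ ρ ∈ γ, ((ρ.card - 1) + 1) = ∑ ρ ∈ γ, ρ.card :=
        Finset.sum_congr rfl (fun ρ hρ => by have := one_le_card_of_mem hγp hρ; omega)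
      rw [Finset.sum_add_distrib, Finset.sum_const, smul_eq_mul, mul_one, sum_card hγp, hN] at h1
      omega
    have h2 : ∀ ρ ∈ γ, 2 * ((ρ.card - 1) * ∏ σ ∈ γ, (∑ x ∈ σ, w x) ^ (σ.card - 1))
        = (ρ.card - 1) * (2 * ∏ σ ∈ γ, (∑ x ∈ σ, w x) ^ (σ.card - 1)) :=
      fun ρ _ => by ring
    rw [Finset.sum_congr rfl h2, ← Finset.sum_mul, hsum1]
    ring
  have hRHS : ∑ γ ∈ (partitions A).filter (fun γ => γ.card = k + 1), ∑ ρ1 ∈ γ,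
      ∑ ρ2 ∈ γ.erase ρ1,
        (∑ x ∈ ρ1 ∪ ρ2, w x) * ∏ σ ∈ γ, (∑ x ∈ σ, w x) ^ (σ.card - 1)
      = 2 * (k * (∑ x ∈ A, w x) *
          ∑ γ ∈ (partitions A).filter (fun γ => γ.card = k + 1),
            ∏ ρ ∈ γ, (∑ x ∈ ρ, w x) ^ (ρ.card - 1)) := by
    rw [Finset.mul_sum, Finset.mul_sum]
    refine Finset.sum_congr rfl ?_
    intro γ hγ
    rw [Finset.mem_filter] at hγ
    obtain ⟨hγp, hγc⟩ := hγ
    have hM : ∑ ρ ∈ γ, ∑ x ∈ ρ, w x = ∑ x ∈ A, w x := sum_sum hγp w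
    obtain ⟨-, -, h3⟩ := mem_partitions.1 hγp
    have hun : ∀ ρ1 ∈ γ, ∀ ρ2 ∈ γ.erase ρ1,
        (∑ x ∈ ρ1 ∪ ρ2, w x) = (∑ x ∈ ρ1, w x) + ∑ x ∈ ρ2, w x := by
      intro ρ1 h1 ρ2 h2
      exact Finset.sum_union (h3 ρ1 h1 ρ2 (Finset.mem_of_mem_erase h2)
        (Ne.symm (Finset.ne_of_mem_erase h2)))
    have hQ : ∑ ρ1 ∈ γ, ∑ ρ2 ∈ γ.erase ρ1, ((∑ x ∈ ρ1, w x) + ∑ x ∈ ρ2, w x)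
        = 2 * (k * ∑ x ∈ A, w x) := by
      have hper : ∀ ρ1 ∈ γ, ∑ ρ2 ∈ γ.erase ρ1, ((∑ x ∈ ρ1, w x) + ∑ x ∈ ρ2, w x)
          = k * (∑ x ∈ ρ1, w x) + ∑ ρ2 ∈ γ.erase ρ1, ∑ x ∈ ρ2, w x := by
        intro ρ1 h1
        rw [Finset.sum_add_distrib, Finset.sum_const, smul_eq_mul,
          Finset.card_erase_of_mem h1, hγc]
        simp
      rw [Finset.sum_congr rfl hper, Finset.sum_add_distrib, ← Finset.mul_sum, hM]
      have hE : ∑ ρ1 ∈ γ, ∑ ρ2 ∈ γ.erase ρ1, ∑ x ∈ ρ2, w x = k * ∑ x ∈ A, w x := by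
        have h4 : ∀ ρ1 ∈ γ, (∑ ρ2 ∈ γ.erase ρ1, ∑ x ∈ ρ2, w x) + ∑ x ∈ ρ1, w x
            = ∑ x ∈ A, w x := by
          intro ρ1 h1
          rw [Finset.sum_erase_add γ _ h1, hM]
        have h5 : ∑ ρ1 ∈ γ, ((∑ ρ2 ∈ γ.erase ρ1, ∑ x ∈ ρ2, w x) + ∑ x ∈ ρ1, w x)
            = (k + 1) * ∑ x ∈ A, w x := by
          rw [Finset.sum_congr rfl h4, Finset.sum_const, smul_eq_mul, hγc]
        rw [Finset.sum_add_distrib, hM, Nat.succ_mul] at h5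
        exact Nat.add_right_cancel h5
      rw [hE]; ring
    calc ∑ ρ1 ∈ γ, ∑ ρ2 ∈ γ.erase ρ1,
          (∑ x ∈ ρ1 ∪ ρ2, w x) * ∏ σ ∈ γ, (∑ x ∈ σ, w x) ^ (σ.card - 1)
        = ∑ ρ1 ∈ γ, ∑ ρ2 ∈ γ.erase ρ1,
          ((∑ x ∈ ρ1, w x) + ∑ x ∈ ρ2, w x) * ∏ σ ∈ γ, (∑ x ∈ σ, w x) ^ (σ.card - 1) := by
          refine Finset.sum_congr rfl (fun ρ1 h1 => Finset.sum_congr rfl (fun ρ2 h2 => ?_))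
          rw [hun ρ1 h1 ρ2 h2]
      _ = (∑ ρ1 ∈ γ, ∑ ρ2 ∈ γ.erase ρ1, ((∑ x ∈ ρ1, w x) + ∑ x ∈ ρ2, w x))
            * ∏ σ ∈ γ, (∑ x ∈ σ, w x) ^ (σ.card - 1) := by
          rw [Finset.sum_mul]
          exact Finset.sum_congr rfl (fun ρ1 _ => by rw [Finset.sum_mul])
      _ = 2 * (k * (∑ x ∈ A, w x) * ∏ σ ∈ γ, (∑ x ∈ σ, w x) ^ (σ.card - 1)) := by
          rw [hQ]; ring
  rw [hLHS, hRHS] at key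
  exact Nat.eq_of_mul_eq_mul_left two_pos key

end TF

namespace TF

variable {α : Type*} [DecidableEq α]

lemma main : ∀ (N : ℕ) (A : Finset α) (w : α → ℕ) (k : ℕ),
    A.card = N → 1 ≤ k → k ≤ N →
    Nat.choose (N - 1) (k - 1) * (∑ x ∈ A, w x) ^ (N - k)
      = ∑ γ ∈ (partitions A).filter (fun γ => γ.card = k),
          ∏ ρ ∈ γ, (∑ x ∈ ρ, w x) ^ (ρ.card - 1) := by
  intro N
  induction N using Nat.strong_induction_on with
  | _ N IH =>
    have key : ∀ d k, 1 ≤ k → k + d = N → ∀ (A : Finset α) (w : α → ℕ), A.card = N →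
        Nat.choose (N - 1) (k - 1) * (∑ x ∈ A, w x) ^ (N - k)
          = ∑ γ ∈ (partitions A).filter (fun γ => γ.card = k),
              ∏ ρ ∈ γ, (∑ x ∈ ρ, w x) ^ (ρ.card - 1) := by
      intro d
      induction d with
      | zero =>
        intro k hk1 hkd A w hA
        have hkN : k = N := by omega
        subst hkN
        rw [← hA, Nat.choose_self, Nat.sub_self, pow_zero, mul_one, filter_card_self,
          Finset.sum_singleton]
        refine (Finset.prod_eq_one ?_).symm
        intro ρ hρ
        obtain ⟨x, -, rfl⟩ := Finset.mem_image.1 hρ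
        simp
      | succ d ihd =>
        intro k hk1 hkd A w hA
        rcases eq_or_lt_of_le hk1 with hk1' | hk2'
        · -- k = 1
          have hAne : A.Nonempty := Finset.card_pos.1 (by omega)
          rw [← hk1', filter_card_one hAne, Finset.sum_singleton, Finset.prod_singleton, hA]
          simp
        · have hk2 : 2 ≤ k := hk2'
          have hkN : k < N := by omega
          have IHsplit : ∀ ρ : Finset α, ρ.card < N → 2 ≤ ρ.card →
              (ρ.card - 1) * (∑ x ∈ ρ, w x) ^ (ρ.card - 2)
                = ∑ δ ∈ (partitions ρ).filter (fun δ => δ.card = 2),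
                    ∏ σ ∈ δ, (∑ x ∈ σ, w x) ^ (σ.card - 1) := by
            intro ρ hlt hc
            have h := IH ρ.card hlt ρ w 2 rfl one_le_two hc
            simpa [Nat.choose_one_right] using h
          have hstep := step w hA hk2 IHsplit
          have hT1 := ihd (k + 1) (by omega) (by omega) A w hA
          simp only [Nat.add_sub_cancel] at hT1
          have hchoose : k * Nat.choose (N - 1) k = (N - k) * Nat.choose (N - 1) (k - 1) := by
            have h := Nat.choose_succ_right_eq (N - 1) (k - 1)
            have e1 : k - 1 + 1 = k := by omega
            have e2 : N - 1 - (k - 1) = N - k := by omega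
            rw [e1, e2] at h
            rw [mul_comm, h]
            exact mul_comm _ _
          have hpow : (∑ x ∈ A, w x) * (∑ x ∈ A, w x) ^ (N - (k + 1))
              = (∑ x ∈ A, w x) ^ (N - k) := by
            rw [← pow_succ']
            congr 1
            omega
          apply Nat.eq_of_mul_eq_mul_left (show 0 < N - k by omega)
          rw [hstep, ← hT1]
          symm
          calc k * (∑ x ∈ A, w x)
                * (Nat.choose (N - 1) k * (∑ x ∈ A, w x) ^ (N - (k + 1)))
              = (k * Nat.choose (N - 1) k)
                * ((∑ x ∈ A, w x) * (∑ x ∈ A, w x) ^ (N - (k + 1))) := by ring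
            _ = ((N - k) * Nat.choose (N - 1) (k - 1)) * (∑ x ∈ A, w x) ^ (N - k) := by
                rw [hchoose, hpow]
            _ = (N - k) * (Nat.choose (N - 1) (k - 1) * (∑ x ∈ A, w x) ^ (N - k)) := by ring
    intro A w k hA hk1 hkN
    exact key (N - k) k hk1 (by omega) A w hA

end TF

/-- For a set partition `π` of `S` with `n` blocks and `1 ≤ k ≤ n`:
`(n−1 choose k−1)·|S|^{n−k} = ∑_{γ ⊢ π, ℓ(γ)=k} ∏_{ρ ∈ γ} ‖ρ‖^{ℓ(ρ)−1}`,
where `‖ρ‖` is the number of elements of `S` in the blocks of `ρ`. -/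
theorem tail_forest_count {V : Type*} [DecidableEq V] (S : Finset V) (n k : ℕ)
    (hk1 : 1 ≤ k) (hkn : k ≤ n) (π : Finset (Finset V))
    (hπ : π ∈ partitions S) (hn : π.card = n) :
    (n - 1).choose (k - 1) * S.card ^ (n - k) =
      ∑ γ ∈ (partitions π).filter (fun γ => γ.card = k),
        ∏ ρ ∈ γ, (∑ B ∈ ρ, B.card) ^ (ρ.card - 1) := by
  have hsum : ∑ B ∈ π, B.card = S.card := TF.sum_card hπ
  have h := TF.main n π (fun B => B.card) k hn hk1 hkn
  rw [← hsum]
  simpa using h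
end
end
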